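/- Let (g, J, ω) be a Kähler Lie algebra with associated metric g(x,y) = ω(Jx,y) and Levi-Civita connection ∇, and let h be an ω-lagrangian ideal of g with J(h) = h. Then ∇_z y ∈ h for all y ∈ h and all z ∈ g, and ∇_x y = 0 for all x, y ∈ h. In particular g is a Walker metric: h is a subspace with g(h,h) = 0 that is parallel, i.e. ∇_z h ⊆ h for all z ∈ g. -/

import Mathlib

section KahlerDefs

variable {L : Type*} [LieRing L] [LieAlgebra ℝ L]

def IsComplexStructure (J : Module.End ℝ L) : Prop :=
  (∀ x, J (J x) = -x) ∧
  ∀ x y : L, ⁅J x, J y⁆ - ⁅x, y⁆ - J ⁅J x, y⁆ - J ⁅x, J y⁆ = 0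

def IsSymplecticForm (ω : L →ₗ[ℝ] L →ₗ[ℝ] ℝ) : Prop :=
  (∀ x, ω x x = 0) ∧
  (∀ x, (∀ y, ω x y = 0) → x = 0) ∧
  ∀ x y z : L, ω ⁅x, y⁆ z + ω ⁅y, z⁆ x + ω ⁅z, x⁆ y = 0

def IsKahlerStructure (J : Module.End ℝ L) (ω : L →ₗ[ℝ] L →ₗ[ℝ] ℝ) : Prop :=
  IsComplexStructure J ∧ IsSymplecticForm ω ∧ ∀ x y : L, ω (J x) (J y) = ω x y

def IsLeviCivita (J : Module.End ℝ L) (ω : L →ₗ[ℝ] L →ₗ[ℝ] ℝ)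
    (D : L →ₗ[ℝ] L →ₗ[ℝ] L) : Prop :=
  ∀ x y z : L,
    2 * ω (J (D x y)) z = ω (J ⁅x, y⁆) z - ω (J ⁅y, z⁆) x + ω (J ⁅z, x⁆) y

noncomputable def ricci (D : L →ₗ[ℝ] L →ₗ[ℝ] L) (x y : L) : ℝ :=
  - LinearMap.trace ℝ L
      ((D x) ∘ₗ (D.flip y) - D.flip (D x y) - (D.flip y) ∘ₗ (LieAlgebra.ad ℝ L x))

def IsFlat (D : L →ₗ[ℝ] L →ₗ[ℝ] L) : Prop :=
  ∀ x y z : L, D x (D y z) - D y (D x z) - D ⁅x, y⁆ z = 0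

end KahlerDefs

section Models

variable (M : Type*) [LieRing M] [LieAlgebra ℝ M]

def IsRxH3 : Prop :=
  ∃ b : Module.Basis (Fin 4) ℝ M,
    ⁅b 0, b 1⁆ = b 2 ∧ ⁅b 0, b 2⁆ = 0 ∧ ⁅b 0, b 3⁆ = 0 ∧
    ⁅b 1, b 2⁆ = 0 ∧ ⁅b 1, b 3⁆ = 0 ∧ ⁅b 2, b 3⁆ = 0

def IsR2xAffR : Prop :=
  ∃ b : Module.Basis (Fin 4) ℝ M,
    ⁅b 0, b 1⁆ = b 1 ∧ ⁅b 0, b 2⁆ = 0 ∧ ⁅b 0, b 3⁆ = 0 ∧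
    ⁅b 1, b 2⁆ = 0 ∧ ⁅b 1, b 3⁆ = 0 ∧ ⁅b 2, b 3⁆ = 0

def IsRxE2 : Prop :=
  ∃ b : Module.Basis (Fin 4) ℝ M,
    ⁅b 0, b 1⁆ = -b 2 ∧ ⁅b 0, b 2⁆ = b 1 ∧ ⁅b 0, b 3⁆ = 0 ∧
    ⁅b 1, b 2⁆ = 0 ∧ ⁅b 1, b 3⁆ = 0 ∧ ⁅b 2, b 3⁆ = 0

def IsAffRxAffR : Prop :=
  ∃ b : Module.Basis (Fin 4) ℝ M,
    ⁅b 0, b 1⁆ = b 1 ∧ ⁅b 0, b 2⁆ = 0 ∧ ⁅b 0, b 3⁆ = 0 ∧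
    ⁅b 1, b 2⁆ = 0 ∧ ⁅b 1, b 3⁆ = 0 ∧ ⁅b 2, b 3⁆ = b 3

def IsAffC : Prop :=
  ∃ b : Module.Basis (Fin 4) ℝ M,
    ⁅b 0, b 1⁆ = 0 ∧ ⁅b 0, b 2⁆ = b 2 ∧ ⁅b 0, b 3⁆ = b 3 ∧
    ⁅b 1, b 2⁆ = b 3 ∧ ⁅b 1, b 3⁆ = -b 2 ∧ ⁅b 2, b 3⁆ = 0

def IsR4m1m1 : Prop :=
  ∃ b : Module.Basis (Fin 4) ℝ M,
    ⁅b 3, b 0⁆ = b 0 ∧ ⁅b 3, b 1⁆ = -b 1 ∧ ⁅b 3, b 2⁆ = -b 2 ∧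
    ⁅b 0, b 1⁆ = 0 ∧ ⁅b 0, b 2⁆ = 0 ∧ ⁅b 1, b 2⁆ = 0

def IsR4'0 (δ : ℝ) : Prop :=
  ∃ b : Module.Basis (Fin 4) ℝ M,
    ⁅b 3, b 0⁆ = b 0 ∧ ⁅b 3, b 1⁆ = -(δ • b 2) ∧ ⁅b 3, b 2⁆ = δ • b 1 ∧
    ⁅b 0, b 1⁆ = 0 ∧ ⁅b 0, b 2⁆ = 0 ∧ ⁅b 1, b 2⁆ = 0

def IsD4 (lam : ℝ) : Prop :=
  ∃ b : Module.Basis (Fin 4) ℝ M,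
    ⁅b 0, b 1⁆ = b 2 ∧ ⁅b 3, b 0⁆ = lam • b 0 ∧ ⁅b 3, b 1⁆ = (1 - lam) • b 1 ∧
    ⁅b 3, b 2⁆ = b 2 ∧ ⁅b 0, b 2⁆ = 0 ∧ ⁅b 1, b 2⁆ = 0

def IsD4' (δ : ℝ) : Prop :=
  ∃ b : Module.Basis (Fin 4) ℝ M,
    ⁅b 0, b 1⁆ = b 2 ∧ ⁅b 3, b 0⁆ = (δ / 2) • b 0 - b 1 ∧
    ⁅b 3, b 1⁆ = b 0 + (δ / 2) • b 1 ∧ ⁅b 3, b 2⁆ = δ • b 2 ∧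
    ⁅b 0, b 2⁆ = 0 ∧ ⁅b 1, b 2⁆ = 0

end Models

/-!
Since `h` is an isotropic ideal, the cocycle identity makes `ω ⁅x, y⁆` vanish for `x, y ∈ h`,
so `h` is abelian. As `J h = h`, the metric `ω (J ·) ·` is null on `h`, and every term of the
Koszul formula for `2 ω (J (∇ₓ y)) w` vanishes as soon as `y, w ∈ h`, or `x, y ∈ h`. In the first
case `∇ₓ y` is `ω`-orthogonal to `J h = h`, hence lies in `h` because `h` is lagrangian; in the
second, nondegeneracy gives `J (∇ₓ y) = 0`.
-/

section KahlerLagrangian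

variable {L : Type*} [LieRing L] [LieAlgebra ℝ L] {J : Module.End ℝ L}
  {ω : L →ₗ[ℝ] L →ₗ[ℝ] ℝ} {D : L →ₗ[ℝ] L →ₗ[ℝ] L} {h : Submodule ℝ L}

theorem lie_mem_of_left_mem (hideal : ∀ x : L, ∀ y ∈ h, ⁅x, y⁆ ∈ h) {x : L} (hx : x ∈ h)
    (y : L) : ⁅x, y⁆ ∈ h := by
  rw [← lie_skew]
  exact h.neg_mem (hideal y x hx)

theorem IsSymplecticForm.lie_eq_zero_of_isotropic_ideal (hω : IsSymplecticForm ω)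
    (hideal : ∀ x : L, ∀ y ∈ h, ⁅x, y⁆ ∈ h) (hiso : ∀ x ∈ h, ∀ y ∈ h, ω x y = 0)
    {x y : L} (hx : x ∈ h) (hy : y ∈ h) : ⁅x, y⁆ = 0 := by
  refine hω.2.1 _ fun z => ?_
  have hyzx : ω ⁅y, z⁆ x = 0 := hiso _ (lie_mem_of_left_mem hideal hy z) _ hx
  have hzxy : ω ⁅z, x⁆ y = 0 := hiso _ (hideal z x hx) _ hy
  linarith [hω.2.2 x y z]

theorem omega_apply_eq_neg_omega_J_apply_J (hω : IsSymplecticForm ω)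
    (hcompat : ∀ x y : L, ω (J x) (J y) = ω x y) (x y : L) : ω x y = -ω (J y) (J x) := by
  rw [hcompat, LinearMap.IsAlt.neg hω.1]

theorem omega_J_eq_zero_of_mem (hJ : ∀ x ∈ h, J x ∈ h) (hiso : ∀ x ∈ h, ∀ y ∈ h, ω x y = 0)
    {x y : L} (hx : x ∈ h) (hy : y ∈ h) : ω (J x) y = 0 :=
  hiso _ (hJ x hx) _ hy

theorem IsLeviCivita.omega_J_apply_eq_zero_of_mem_of_mem (hD : IsLeviCivita J ω D)
    (hω : IsSymplecticForm ω) (hJ : ∀ x ∈ h, J x ∈ h)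
    (hideal : ∀ x : L, ∀ y ∈ h, ⁅x, y⁆ ∈ h) (hiso : ∀ x ∈ h, ∀ y ∈ h, ω x y = 0)
    (x : L) {y w : L} (hy : y ∈ h) (hw : w ∈ h) :
    ω (J (D x y)) w = 0 := by
  have hxy : ω (J ⁅x, y⁆) w = 0 := omega_J_eq_zero_of_mem hJ hiso (hideal x y hy) hw
  have hwx : ω (J ⁅w, x⁆) y = 0 :=
    omega_J_eq_zero_of_mem hJ hiso (lie_mem_of_left_mem hideal hw x) hy
  have hyw : ⁅y, w⁆ = 0 := hω.lie_eq_zero_of_isotropic_ideal hideal hiso hy hw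
  have := hD x y w
  rw [hxy, hwx, hyw, map_zero, LinearMap.map_zero₂] at this
  linarith

theorem IsLeviCivita.omega_J_apply_eq_zero_of_mem (hD : IsLeviCivita J ω D)
    (hω : IsSymplecticForm ω) (hJ : ∀ x ∈ h, J x ∈ h)
    (hideal : ∀ x : L, ∀ y ∈ h, ⁅x, y⁆ ∈ h) (hiso : ∀ x ∈ h, ∀ y ∈ h, ω x y = 0)
    {x y : L} (hx : x ∈ h) (hy : y ∈ h) (z : L) :
    ω (J (D x y)) z = 0 := by
  have hyz : ω (J ⁅y, z⁆) x = 0 :=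
    omega_J_eq_zero_of_mem hJ hiso (lie_mem_of_left_mem hideal hy z) hx
  have hzx : ω (J ⁅z, x⁆) y = 0 := omega_J_eq_zero_of_mem hJ hiso (hideal z x hx) hy
  have hxy : ⁅x, y⁆ = 0 := hω.lie_eq_zero_of_isotropic_ideal hideal hiso hx hy
  have := hD x y z
  rw [hyz, hzx, hxy, map_zero, LinearMap.map_zero₂] at this
  linarith

end KahlerLagrangian

theorem J_invariant_lagrangian_ideal_walker_general
    {L : Type*} [LieRing L] [LieAlgebra ℝ L]
    (J : Module.End ℝ L) (ω : L →ₗ[ℝ] L →ₗ[ℝ] ℝ)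
    (hK : IsKahlerStructure J ω)
    (D : L →ₗ[ℝ] L →ₗ[ℝ] L) (hD : IsLeviCivita J ω D)
    (h : Submodule ℝ L) (hideal : ∀ x : L, ∀ y ∈ h, ⁅x, y⁆ ∈ h)
    (hiso : ∀ x ∈ h, ∀ y ∈ h, ω x y = 0)
    (hlag : ∀ y : L, (∀ x ∈ h, ω x y = 0) → y ∈ h)
    (hJh : Submodule.map J h = h) :
    (∀ z : L, ∀ y ∈ h, D z y ∈ h) ∧
    (∀ x ∈ h, ∀ y ∈ h, D x y = 0) ∧
    (∀ x ∈ h, ∀ y ∈ h, ω (J x) y = 0) := by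
  obtain ⟨⟨hJJ, -⟩, hω, hcompat⟩ := hK
  have hJ : ∀ x ∈ h, J x ∈ h := fun x hx => hJh ▸ Submodule.mem_map_of_mem hx
  refine ⟨fun z y hy => hlag _ fun x hx => ?_, fun x hx y hy => ?_,
    fun x hx y hy => omega_J_eq_zero_of_mem hJ hiso hx hy⟩
  · rw [omega_apply_eq_neg_omega_J_apply_J hω hcompat,
      hD.omega_J_apply_eq_zero_of_mem_of_mem hω hJ hideal hiso z hy (hJ x hx), neg_zero]
  · have hJD : J (D x y) = 0 :=
      hω.2.1 _ (hD.omega_J_apply_eq_zero_of_mem hω hJ hideal hiso hx hy)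
    rw [← neg_neg (D x y), ← hJJ (D x y), hJD, map_zero, neg_zero]

/-- For a Kähler Lie algebra with ω-lagrangian ideal h satisfying J(h) = h,
the Levi-Civita connection satisfies ∇_z y ∈ h for y ∈ h, ∇_x y = 0 for x,y ∈ h, and the
metric g(x,y) = ω(Jx,y) is null on h; hence g is a Walker metric with parallel null
subspace h. -/
theorem J_invariant_lagrangian_ideal_walker
    {L : Type*} [LieRing L] [LieAlgebra ℝ L] [Module.Finite ℝ L]
    (J : Module.End ℝ L) (ω : L →ₗ[ℝ] L →ₗ[ℝ] ℝ)
    (hK : IsKahlerStructure J ω)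
    (D : L →ₗ[ℝ] L →ₗ[ℝ] L) (hD : IsLeviCivita J ω D)
    (h : Submodule ℝ L) (hideal : ∀ x : L, ∀ y ∈ h, ⁅x, y⁆ ∈ h)
    (hiso : ∀ x ∈ h, ∀ y ∈ h, ω x y = 0)
    (hlag : ∀ y : L, (∀ x ∈ h, ω x y = 0) → y ∈ h)
    (hJh : Submodule.map J h = h) :
    (∀ z : L, ∀ y ∈ h, D z y ∈ h) ∧
    (∀ x ∈ h, ∀ y ∈ h, D x y = 0) ∧
    (∀ x ∈ h, ∀ y ∈ h, ω (J x) y = 0) :=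
  J_invariant_lagrangian_ideal_walker_general J ω hK D hD h hideal hiso hlag hJh
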